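/- (Complex analogue of Lemma 4) Let k1 ≥ 3 and m1 ≥ 5 be natural numbers. Let σ_1, …, σ_{k1} and σ*_1, …, σ*_{k1} be complex numbers with |σ_t| < 4/3 and |σ*_t − σ_t| ≤ 2^{-m1} for all t; let τ_2, …, τ_{k1} and τ*_2, …, τ*_{k1} be complex numbers with |τ_t| ≤ 1/4 and |τ*_t − τ_t| ≤ 2^{-m1} for all t; let ε_2, …, ε_{k1} be complex numbers with |ε_i| < 2^{-m1}. Define h_1 = σ*_{k1} and h_i = σ*_{k1−i+1} + τ*_{k1−i+2}·h_{i−1} + ε_i for 2 ≤ i ≤ k1, and define H_1 = σ_{k1} and H_i = σ_{k1−i+1} + τ_{k1−i+2}·H_{i−1} for 2 ≤ i ≤ k1. Then |h_{k1} − H_{k1}| < 2^{-m1+k1}. -/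

import Mathlib

/-!
The exact values stay bounded by `16/9`, the fixed point of `x ↦ 4/3 + x/4`. Comparing one step
of the two recursions, the new error is at most `δ + δ·16/9 + (1/4 + δ)·e + δ` where `e` is the
old error and `δ = 2^{-m1}`; since `δ ≤ 1/32`, this keeps the error below the uniform bound `6δ`,
which is smaller than `2^{k1}·δ` as soon as `k1 ≥ 3`.
-/

section PerturbedRecursion

variable {R : Type*} [SeminormedRing R]

lemma norm_perturbed_step_sub_le (a a' b b' x x' e : R) :
    ‖a' + b' * x' + e - (a + b * x)‖ ≤
      ‖a' - a‖ + ‖b' - b‖ * ‖x‖ + ‖b'‖ * ‖x' - x‖ + ‖e‖ := by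
  have hsplit : a' + b' * x' + e - (a + b * x) =
      (a' - a) + (b' - b) * x + b' * (x' - x) + e := by noncomm_ring
  rw [hsplit]
  refine norm_add₄_le.trans ?_
  gcongr <;> exact norm_mul_le _ _

lemma norm_add_mul_lt_sixteen_ninths {a b x : R} (ha : ‖a‖ < 4 / 3) (hb : ‖b‖ ≤ 1 / 4)
    (hx : ‖x‖ < 16 / 9) : ‖a + b * x‖ < 16 / 9 :=
  calc ‖a + b * x‖ ≤ ‖a‖ + ‖b‖ * ‖x‖ := (norm_add_le _ _).trans (by gcongr; exact norm_mul_le _ _)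
    _ < 16 / 9 := by nlinarith [norm_nonneg b, norm_nonneg x]

lemma norm_perturbed_step_sub_le_six_mul {δ : ℝ} (hδ : δ ≤ 1 / 32) {a a' b b' x x' e : R}
    (ha : ‖a' - a‖ ≤ δ) (hb : ‖b‖ ≤ 1 / 4) (hb' : ‖b' - b‖ ≤ δ) (hx : ‖x‖ < 16 / 9)
    (hx' : ‖x' - x‖ ≤ 6 * δ) (he : ‖e‖ < δ) :
    ‖a' + b' * x' + e - (a + b * x)‖ ≤ 6 * δ := by
  have hb'_le : ‖b'‖ ≤ 1 / 4 + δ :=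
    calc ‖b'‖ = ‖(b' - b) + b‖ := by rw [sub_add_cancel]
      _ ≤ ‖b' - b‖ + ‖b‖ := norm_add_le _ _
      _ ≤ 1 / 4 + δ := by linarith
  refine (norm_perturbed_step_sub_le a a' b b' x x' e).trans ?_
  nlinarith [norm_nonneg (b' - b), norm_nonneg x, norm_nonneg (x' - x), norm_nonneg b']

theorem norm_perturbed_recursion_sub_le {n : ℕ} {δ : ℝ} (hδ : δ ≤ 1 / 32)
    {a a' b b' e x y : ℕ → R}
    (ha : ∀ i, 2 ≤ i → i ≤ n → ‖a i‖ < 4 / 3)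
    (ha' : ∀ i, 2 ≤ i → i ≤ n → ‖a' i - a i‖ ≤ δ)
    (hb : ∀ i, 2 ≤ i → i ≤ n → ‖b i‖ ≤ 1 / 4)
    (hb' : ∀ i, 2 ≤ i → i ≤ n → ‖b' i - b i‖ ≤ δ)
    (he : ∀ i, 2 ≤ i → i ≤ n → ‖e i‖ < δ)
    (hx₁ : ‖x 1‖ < 16 / 9) (hy₁ : ‖y 1 - x 1‖ ≤ 6 * δ)
    (hx : ∀ i, 2 ≤ i → i ≤ n → x i = a i + b i * x (i - 1))
    (hy : ∀ i, 2 ≤ i → i ≤ n → y i = a' i + b' i * y (i - 1) + e i) :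
    ∀ i, 1 ≤ i → i ≤ n → ‖x i‖ < 16 / 9 ∧ ‖y i - x i‖ ≤ 6 * δ := by
  intro i hi
  induction i, hi using Nat.le_induction with
  | base => exact fun _ ↦ ⟨hx₁, hy₁⟩
  | succ i hi ih =>
    intro hin
    obtain ⟨hxi, hyi⟩ := ih (by omega)
    have h2 : 2 ≤ i + 1 := by omega
    rw [hx _ h2 hin, hy _ h2 hin, Nat.add_sub_cancel]
    exact ⟨norm_add_mul_lt_sixteen_ninths (ha _ h2 hin) (hb _ h2 hin) hxi,
      norm_perturbed_step_sub_le_six_mul hδ (ha' _ h2 hin) (hb _ h2 hin) (hb' _ h2 hin) hxi hyi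
        (he _ h2 hin)⟩

end PerturbedRecursion

lemma two_zpow_neg_le_one_div_thirty_two {m : ℕ} (hm : 5 ≤ m) :
    (2 : ℝ) ^ (-(m : ℤ)) ≤ 1 / 32 :=
  calc (2 : ℝ) ^ (-(m : ℤ)) ≤ 2 ^ (-(5 : ℤ)) := zpow_le_zpow_right₀ (by norm_num) (by omega)
    _ = 1 / 32 := by norm_num

/-- (Complex analogue of Lemma 4) The total error of the iterative evaluation
of the nested expression `σ_1 + τ_2[σ_2 + … + τ_{k1}σ_{k1}]` with complex
blocks and working accuracy `2^{-m1}` is smaller than `2^{-m1+k1}`. -/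
theorem lemma4_complex_error_bound (k1 m1 : ℕ) (hk1 : 3 ≤ k1) (hm1 : 5 ≤ m1)
    (σ σs τ τs ε h H : ℕ → ℂ)
    (hσ : ∀ t, 1 ≤ t → t ≤ k1 → ‖σ t‖ < 4 / 3)
    (hσs : ∀ t, 1 ≤ t → t ≤ k1 → ‖σs t - σ t‖ ≤ 2 ^ (-(m1 : ℤ)))
    (hτ : ∀ t, 2 ≤ t → t ≤ k1 → ‖τ t‖ ≤ 1 / 4)
    (hτs : ∀ t, 2 ≤ t → t ≤ k1 → ‖τs t - τ t‖ ≤ 2 ^ (-(m1 : ℤ)))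
    (hε : ∀ i, 2 ≤ i → i ≤ k1 → ‖ε i‖ < 2 ^ (-(m1 : ℤ)))
    (h1 : h 1 = σs k1)
    (hstep : ∀ i, 2 ≤ i → i ≤ k1 →
      h i = σs (k1 - i + 1) + τs (k1 - i + 2) * h (i - 1) + ε i)
    (H1 : H 1 = σ k1)
    (Hstep : ∀ i, 2 ≤ i → i ≤ k1 →
      H i = σ (k1 - i + 1) + τ (k1 - i + 2) * H (i - 1)) :
    ‖h k1 - H k1‖ < 2 ^ (-(m1 : ℤ) + k1) := by
  set δ : ℝ := 2 ^ (-(m1 : ℤ))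
  have hδ : 0 < δ := by positivity
  have hδ₁ : δ ≤ 1 / 32 := two_zpow_neg_le_one_div_thirty_two hm1
  have hσk := hσ k1 (by omega) le_rfl
  have hσsk := hσs k1 (by omega) le_rfl
  have herr := (norm_perturbed_recursion_sub_le hδ₁
    (a := fun i ↦ σ (k1 - i + 1)) (b := fun i ↦ τ (k1 - i + 2))
    (fun i _ _ ↦ hσ _ (by omega) (by omega)) (fun i _ _ ↦ hσs _ (by omega) (by omega))
    (fun i _ _ ↦ hτ _ (by omega) (by omega)) (fun i _ _ ↦ hτs _ (by omega) (by omega)) hε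
    (by rw [H1]; linarith) (by rw [h1, H1]; linarith) Hstep hstep k1 (by omega) le_rfl).2
  have h8 : (8 : ℝ) ≤ 2 ^ k1 :=
    calc (8 : ℝ) = 2 ^ 3 := by norm_num
      _ ≤ 2 ^ k1 := pow_le_pow_right₀ (by norm_num) hk1
  calc ‖h k1 - H k1‖ ≤ 6 * δ := herr
    _ < 2 ^ k1 * δ := by nlinarith
    _ = 2 ^ (-(m1 : ℤ) + k1) := by rw [zpow_add₀ two_ne_zero, zpow_natCast, mul_comm]
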